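/- Let G be a nontrivial finite group with a nonaxial 3D-rotation module. Then the pair (r, s), where r is the number of G-orbits of positive-type axes and s the number of orbits of negative-type axes, equals (1,1) or (0,3). -/
import Mathlib


open Pointwise

/-- A 3D-rotation module: each nontrivial `g` has a nontrivial axis `A_g ≤ V` such that
(1) `h • A_g = A_{hgh⁻¹}`, (2) `h` centralizes `A_g` iff `A_h = A_g`, and
(3) elements of `N_G(A_g) \ C_G(A_g)` invert `A_g`. -/
structure Rotation3DModule (G : Type*) [Group G] (V : Type*) [AddCommGroup V]
    [DistribMulAction G V] where
  axis : G → AddSubgroup V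
  axis_ne_bot : ∀ g : G, g ≠ 1 → axis g ≠ ⊥
  axis_conj : ∀ g h : G, g ≠ 1 → h ≠ 1 → h • axis g = axis (h * g * h⁻¹)
  cent_iff : ∀ g h : G, g ≠ 1 → h ≠ 1 → ((∀ v ∈ axis g, h • v = v) ↔ axis h = axis g)
  norm_inverts : ∀ g h : G, g ≠ 1 → h ≠ 1 → h • axis g = axis g →
    ¬ (∀ v ∈ axis g, h • v = v) → ∀ v ∈ axis g, h • v = -v

/-- The centralizer `C_G(A)` of a subgroup `A ≤ V` inside `G`. -/
def axisCent (G : Type*) [Group G] {V : Type*} [AddCommGroup V] [DistribMulAction G V]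
    (A : AddSubgroup V) : Subgroup G where
  carrier := {h : G | ∀ v ∈ A, h • v = v}
  one_mem' := fun v _ => one_smul G v
  mul_mem' := by
    intro a b ha hb v hv
    rw [mul_smul, hb v hv, ha v hv]
  inv_mem' := by
    intro a ha v hv
    conv_lhs => rw [← ha v hv]
    rw [inv_smul_smul]

/-- The normalizer `N_G(A)` of a subgroup `A ≤ V` inside `G`, i.e. the stabilizer of `A`
under the pointwise action of `G` on subgroups of `V`. -/
def axisNorm (G : Type*) [Group G] {V : Type*} [AddCommGroup V] [DistribMulAction G V]
    (A : AddSubgroup V) : Subgroup G := MulAction.stabilizer G A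

section Aux

variable {G V : Type*} [Group G] [AddCommGroup V] [DistribMulAction G V]

lemma mem_axisCent {A : AddSubgroup V} {h : G} :
    h ∈ axisCent G A ↔ ∀ v ∈ A, h • v = v := Iff.rfl

lemma mem_axisNorm {A : AddSubgroup V} {h : G} :
    h ∈ axisNorm G A ↔ h • A = A := Iff.rfl

lemma cent_le_norm (A : AddSubgroup V) : axisCent G A ≤ axisNorm G A := by
  intro h hh
  rw [mem_axisNorm]
  ext v
  rw [AddSubgroup.mem_pointwise_smul_iff_inv_smul_mem]
  constructor
  · intro hv
    have h1 := hh _ hv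
    have h2 : h • h⁻¹ • v = v := smul_inv_smul h v
    rw [h1] at h2
    rwa [h2] at hv
  · intro hv
    have h1 := hh v hv
    rw [← h1, inv_smul_smul]
    exact hv

lemma smul_axisCent (h : G) (C : AddSubgroup V) :
    axisCent G (h • C) = (axisCent G C).map (MulAut.conj h).toMonoidHom := by
  ext k
  rw [Subgroup.mem_map_equiv, mem_axisCent, mem_axisCent]
  constructor
  · intro hk w hw
    have hmem : h • w ∈ h • C := AddSubgroup.smul_mem_pointwise_smul w h C hw
    have := hk _ hmem
    simp only [MulAut.conj_symm_apply]
    calc (h⁻¹ * k * h) • w = h⁻¹ • k • h • w := by rw [mul_smul, mul_smul]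
    _ = h⁻¹ • h • w := by rw [this]
    _ = w := inv_smul_smul h w
  · intro hk v hv
    rw [AddSubgroup.mem_pointwise_smul_iff_inv_smul_mem] at hv
    have := hk _ hv
    simp only [MulAut.conj_symm_apply] at this
    have h2 : k • h • h⁻¹ • v = h • h⁻¹ • v := by
      have := congrArg (fun w => h • w) this
      simpa [mul_smul] using this
    simpa [smul_inv_smul] using h2

lemma smul_axisNorm (h : G) (C : AddSubgroup V) :
    axisNorm G (h • C) = (axisNorm G C).map (MulAut.conj h).toMonoidHom :=
  MulAction.stabilizer_smul_eq_stabilizer_map_conj h C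

lemma card_axisCent_smul (h : G) (C : AddSubgroup V) :
    Nat.card (axisCent G (h • C)) = Nat.card (axisCent G C) := by
  rw [smul_axisCent]
  exact (Nat.card_congr (Subgroup.equivMapOfInjective _ _ (MulAut.conj h).injective).toEquiv).symm

lemma card_axisNorm_smul (h : G) (C : AddSubgroup V) :
    Nat.card (axisNorm G (h • C)) = Nat.card (axisNorm G C) := by
  rw [smul_axisNorm]
  exact (Nat.card_congr (Subgroup.equivMapOfInjective _ _ (MulAut.conj h).injective).toEquiv).symm

lemma pos_smul_iff (h : G) (C : AddSubgroup V) :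
    (axisNorm G (h • C) = axisCent G (h • C)) ↔ (axisNorm G C = axisCent G C) := by
  rw [smul_axisNorm, smul_axisCent]
  constructor
  · intro e
    exact Subgroup.map_injective (MulAut.conj h).injective e
  · intro e
    rw [e]

variable (M : Rotation3DModule G V)

lemma isAxis_smul {C : AddSubgroup V} (hax : ∃ g : G, g ≠ 1 ∧ M.axis g = C) (h : G) :
    ∃ g : G, g ≠ 1 ∧ M.axis g = h • C := by
  obtain ⟨g, hg, rfl⟩ := hax
  by_cases hh : h = 1
  · exact ⟨g, hg, by rw [hh, one_smul]⟩
  · exact ⟨h * g * h⁻¹, by simp [conj_eq_one_iff, hg], (M.axis_conj g h hg hh).symm⟩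

lemma mem_cent_iff_axis {C : AddSubgroup V} {g₀ : G} (hg₀ : g₀ ≠ 1) (hC : M.axis g₀ = C)
    {g : G} (hg : g ≠ 1) : g ∈ axisCent G C ↔ M.axis g = C := by
  subst hC
  exact M.cent_iff g₀ g hg₀ hg

lemma card_norm_of_neg {C : AddSubgroup V} (hax : ∃ g : G, g ≠ 1 ∧ M.axis g = C)
    (hne : axisNorm G C ≠ axisCent G C) :
    Nat.card (axisNorm G C) = 2 * Nat.card (axisCent G C) := by
  obtain ⟨g₀, hg₀, hax₀⟩ := hax
  have hle : axisCent G C ≤ axisNorm G C := cent_le_norm C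
  have hnotle : ¬ axisNorm G C ≤ axisCent G C := fun hcon => hne (le_antisymm hcon hle)
  obtain ⟨u, hu, huc⟩ := SetLike.not_le_iff_exists.1 hnotle
  -- elements of N \ C invert
  have hinv : ∀ k : G, k ∈ axisNorm G C → k ∉ axisCent G C → ∀ v ∈ C, k • v = -v := by
    intro k hk hkc
    have hk1 : k ≠ 1 := fun e => hkc (e ▸ (axisCent G C).one_mem)
    have := M.norm_inverts g₀ k hg₀ hk1 (by rw [hax₀]; exact hk) (by rw [hax₀]; exact hkc)
    rwa [hax₀] at this
  -- index two
  set Nn := axisNorm G C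
  set Cc := axisCent G C
  have hidx : ((Cc.subgroupOf Nn)).index = 2 := by
    rw [Subgroup.index_eq_two_iff]
    refine ⟨⟨u, hu⟩, fun b => ?_⟩
    by_cases hb : (b : G) ∈ Cc
    · right
      refine ⟨hb, ?_⟩
      intro hbu
      rw [Subgroup.mem_subgroupOf] at hbu
      have : (u : G) ∈ Cc := by
        have : ((b * ⟨u, hu⟩ : Nn) : G) = (b : G) * u := rfl
        rw [this] at hbu
        have := Cc.mul_mem (Cc.inv_mem hb) hbu
        simpa [mul_assoc] using this
      exact huc this
    · left
      constructor
      · rw [Subgroup.mem_subgroupOf]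
        show ((b : G) * u) ∈ Cc
        rw [mem_axisCent]
        intro v hv
        have hbv := hinv (b : G) b.2 hb v hv
        have huv := hinv u hu huc v hv
        rw [mul_smul, huv, smul_neg, hbv, neg_neg]
      · rwa [Subgroup.mem_subgroupOf]
  have h1 : (Cc.subgroupOf Nn).index * Nat.card (Cc.subgroupOf Nn) = Nat.card Nn :=
    Subgroup.index_mul_card _
  have h2 : Nat.card (Cc.subgroupOf Nn) = Nat.card Cc :=
    Nat.card_congr (Subgroup.subgroupOfEquivOfLe hle).toEquiv
  rw [hidx, h2] at h1
  exact h1.symm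

end Aux

section Count

open Finset
open scoped Classical

variable {G V : Type*} [Group G] [AddCommGroup V] [DistribMulAction G V]
  (M : Rotation3DModule G V) [Fintype G]

lemma count_fiber {C : AddSubgroup V} (hax : ∃ g : G, g ≠ 1 ∧ M.axis g = C) :
    (Finset.univ.filter fun g : G => g ≠ 1 ∧ M.axis g = C).card
      = Nat.card (axisCent G C) - 1 := by
  classical
  obtain ⟨g₀, hg₀, hC⟩ := hax
  have h1 : (Finset.univ.filter fun g : G => g ≠ 1 ∧ M.axis g = C)
      = (Finset.univ.filter fun g : G => g ∈ axisCent G C).erase 1 := by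
    ext g
    simp only [mem_filter, mem_univ, true_and, mem_erase]
    constructor
    · rintro ⟨hg, hgc⟩
      exact ⟨hg, (mem_cent_iff_axis M hg₀ hC hg).2 hgc⟩
    · rintro ⟨hg, hgc⟩
      exact ⟨hg, (mem_cent_iff_axis M hg₀ hC hg).1 hgc⟩
  rw [h1, Finset.card_erase_of_mem (by simp [(axisCent G C).one_mem])]
  congr 1
  rw [Nat.card_eq_fintype_card, Fintype.card_subtype]

lemma count_orbit {C₀ : AddSubgroup V} (hax : ∃ g : G, g ≠ 1 ∧ M.axis g = C₀) :
    (Finset.univ.filter fun g : G => g ≠ 1 ∧ M.axis g ∈ MulAction.orbit G C₀).card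
      = Nat.card (MulAction.orbit G C₀) * (Nat.card (axisCent G C₀) - 1) := by
  classical
  have hfin : (MulAction.orbit G C₀).Finite := Set.finite_range _
  have hO : ∀ g ∈ (Finset.univ.filter fun g : G => g ≠ 1 ∧ M.axis g ∈ MulAction.orbit G C₀),
      M.axis g ∈ hfin.toFinset := by
    intro g hg
    rw [Set.Finite.mem_toFinset]
    exact (Finset.mem_filter.1 hg).2.2
  rw [Finset.card_eq_sum_card_fiberwise hO]
  have hfib : ∀ C ∈ hfin.toFinset,
      ((Finset.univ.filter fun g : G => g ≠ 1 ∧ M.axis g ∈ MulAction.orbit G C₀).filter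
        (fun g => M.axis g = C)).card = Nat.card (axisCent G C₀) - 1 := by
    intro C hC
    have hCorb : C ∈ MulAction.orbit G C₀ := hfin.mem_toFinset.1 hC
    obtain ⟨h, hh⟩ := MulAction.mem_orbit_iff.1 hCorb
    have heq : ((Finset.univ.filter fun g : G => g ≠ 1 ∧ M.axis g ∈ MulAction.orbit G C₀).filter
        (fun g => M.axis g = C)) = Finset.univ.filter fun g : G => g ≠ 1 ∧ M.axis g = C := by
      ext g
      simp only [mem_filter, mem_univ, true_and]
      constructor
      · rintro ⟨⟨h1, _⟩, h3⟩; exact ⟨h1, h3⟩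
      · rintro ⟨h1, h3⟩; exact ⟨⟨h1, h3 ▸ hCorb⟩, h3⟩
    rw [heq, count_fiber M (hh ▸ isAxis_smul M hax h), ← hh, card_axisCent_smul]
  rw [Finset.sum_congr rfl hfib, Finset.sum_const, smul_eq_mul]
  congr 1
  rw [Nat.card_coe_set_eq, Set.ncard_eq_toFinset_card _ hfin]

lemma orbit_stab (x : AddSubgroup V) :
    Nat.card (MulAction.orbit G x) * Nat.card (MulAction.stabilizer G x) = Nat.card G := by
  classical
  have h1 : Fintype (MulAction.orbit G x) := Set.Finite.fintype (Set.finite_range _)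
  simp only [Nat.card_eq_fintype_card]
  exact MulAction.card_orbit_mul_card_stabilizer_eq_card_group G x

end Count

section Main

open Finset
open scoped Classical

/-- helper: `1 < Nat.card` of a subgroup containing a nontrivial element -/
lemma two_le_card_subgroup {G : Type*} [Group G] [Finite G] {H : Subgroup G}
    {g : G} (hg : g ≠ 1) (hmem : g ∈ H) : 2 ≤ Nat.card H := by
  have : Nontrivial H := ⟨⟨⟨g, hmem⟩, ⟨1, H.one_mem⟩, by simp [Subtype.ext_iff, hg]⟩⟩
  exact Finite.one_lt_card_iff_nontrivial.2 this

lemma two_le_card_orbit {G : Type*} [Group G] [Finite G] {V : Type*} [AddCommGroup V]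
    [DistribMulAction G V] {C : AddSubgroup V} {h : G} (hh : h • C ≠ C) :
    2 ≤ Nat.card (MulAction.orbit G C) := by
  have hfin : (MulAction.orbit G C).Finite := Set.finite_range _
  have : Finite (MulAction.orbit G C) := hfin.to_subtype
  have : Nontrivial (MulAction.orbit G C) :=
    ⟨⟨⟨h • C, MulAction.mem_orbit C h⟩, ⟨C, MulAction.mem_orbit_self C⟩,
      by simp [Subtype.ext_iff, hh]⟩⟩
  exact Finite.one_lt_card_iff_nontrivial.2 this

/-- STATEMENT: orbit equation setup. -/
theorem stmt13 {G V : Type*} [Group G] [Finite G] [Nontrivial G]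
    [AddCommGroup V] [DistribMulAction G V] (M : Rotation3DModule G V)
    (hnonaxial : ∀ g : G, g ≠ 1 → ∃ h : G, h • M.axis g ≠ M.axis g)
    (r s : ℕ) (A : Fin r → AddSubgroup V) (B : Fin s → AddSubgroup V)
    -- the `A i` are positive-type axes (`N_G(A) = C_G(A)`) …
    (hA : ∀ i, (∃ g : G, g ≠ 1 ∧ M.axis g = A i) ∧ axisNorm G (A i) = axisCent G (A i))
    -- … forming a system of representatives of the `G`-orbits of positive-type axes
    (hAorb : ∀ C : AddSubgroup V, (∃ g : G, g ≠ 1 ∧ M.axis g = C) →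
      axisNorm G C = axisCent G C → ∃! i : Fin r, ∃ h : G, h • A i = C)
    -- the `B j` are negative-type axes (`N_G(B) ≠ C_G(B)`) …
    (hB : ∀ j, (∃ g : G, g ≠ 1 ∧ M.axis g = B j) ∧ axisNorm G (B j) ≠ axisCent G (B j))
    -- … forming a system of representatives of the `G`-orbits of negative-type axes
    (hBorb : ∀ C : AddSubgroup V, (∃ g : G, g ≠ 1 ∧ M.axis g = C) →
      axisNorm G C ≠ axisCent G C → ∃! j : Fin s, ∃ h : G, h • B j = C) :
    (r = 1 ∧ s = 1) ∨ (r = 0 ∧ s = 3) := by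
  classical
  have hfG : Fintype G := Fintype.ofFinite G
  set N : ℕ := Nat.card G with hN
  have hN2 : 2 ≤ N := Finite.one_lt_card_iff_nontrivial.2 inferInstance
  -- the finsets of nontrivial group elements whose axis lies in the orbit of `A i` / `B j`
  set SF : Fin r → Finset G :=
    fun i => Finset.univ.filter fun g : G => g ≠ 1 ∧ M.axis g ∈ MulAction.orbit G (A i) with hSF
  set TF : Fin s → Finset G :=
    fun j => Finset.univ.filter fun g : G => g ≠ 1 ∧ M.axis g ∈ MulAction.orbit G (B j) with hTF
  set a : Fin r → ℕ := fun i => Nat.card (MulAction.orbit G (A i)) with ha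
  set b : Fin s → ℕ := fun j => Nat.card (MulAction.orbit G (B j)) with hb
  -- transfer of type along orbits
  have hposorb : ∀ (C D : AddSubgroup V) (h : G), h • D = C →
      ((axisNorm G C = axisCent G C) ↔ (axisNorm G D = axisCent G D)) := by
    intro C D h hh
    rw [← hh]
    exact pos_smul_iff h D
  -- per-index facts, positive type
  have hSfact : ∀ i, (SF i).card + a i = N ∧ 2 * a i ≤ N ∧ 2 ≤ a i := by
    intro i
    obtain ⟨hax, hpos⟩ := hA i
    obtain ⟨g₀, hg₀, hax₀⟩ := hax
    set c : ℕ := Nat.card (axisCent G (A i)) with hc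
    have hc2 : 2 ≤ c := two_le_card_subgroup hg₀ (by
      rw [mem_cent_iff_axis M hg₀ hax₀ hg₀]; exact hax₀)
    have hos : a i * c = N := by
      have := orbit_stab (G := G) (A i)
      rwa [show MulAction.stabilizer G (A i) = axisCent G (A i) from hpos] at this
    have hcount : (SF i).card = a i * (c - 1) := count_orbit M ⟨g₀, hg₀, hax₀⟩
    refine ⟨?_, ?_, ?_⟩
    · have h1 : a i * (c - 1) + a i * 1 = a i * (c - 1 + 1) := (Nat.mul_add _ _ _).symm
      have h2 : c - 1 + 1 = c := Nat.succ_pred_eq_of_pos (lt_of_lt_of_le Nat.zero_lt_two hc2)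
      rw [hcount]
      calc a i * (c - 1) + a i = a i * (c - 1) + a i * 1 := by rw [Nat.mul_one]
        _ = a i * (c - 1 + 1) := h1
        _ = a i * c := by rw [h2]
        _ = N := hos
    · calc 2 * a i = a i * 2 := Nat.mul_comm _ _
        _ ≤ a i * c := Nat.mul_le_mul_left _ hc2
        _ = N := hos
    · obtain ⟨h, hh⟩ := hnonaxial g₀ hg₀
      rw [hax₀] at hh
      exact two_le_card_orbit hh
  -- per-index facts, negative type
  have hTfact : ∀ j, 2 * (TF j).card + 2 * b j = N ∧ 4 * b j ≤ N ∧ 2 ≤ b j := by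
    intro j
    obtain ⟨hax, hneg⟩ := hB j
    obtain ⟨g₀, hg₀, hax₀⟩ := hax
    set c : ℕ := Nat.card (axisCent G (B j)) with hc
    have hc2 : 2 ≤ c := two_le_card_subgroup hg₀ (by
      rw [mem_cent_iff_axis M hg₀ hax₀ hg₀]; exact hax₀)
    have hnc : Nat.card (axisNorm G (B j)) = 2 * c := card_norm_of_neg M ⟨g₀, hg₀, hax₀⟩ hneg
    have hos : b j * (2 * c) = N := by
      have := orbit_stab (G := G) (B j)
      rwa [show MulAction.stabilizer G (B j) = axisNorm G (B j) from rfl, hnc] at this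
    have hcount : (TF j).card = b j * (c - 1) := count_orbit M ⟨g₀, hg₀, hax₀⟩
    refine ⟨?_, ?_, ?_⟩
    · have h2 : c - 1 + 1 = c := Nat.succ_pred_eq_of_pos (lt_of_lt_of_le Nat.zero_lt_two hc2)
      rw [hcount]
      calc 2 * (b j * (c - 1)) + 2 * b j = (b j * 2) * (c - 1) + (b j * 2) * 1 := by ring
        _ = (b j * 2) * (c - 1 + 1) := (Nat.mul_add _ _ _).symm
        _ = b j * (2 * c) := by rw [h2]; ring
        _ = N := hos
    · calc 4 * b j = b j * (2 * 2) := by ring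
        _ ≤ b j * (2 * c) := Nat.mul_le_mul_left _ (by omega)
        _ = N := hos
    · obtain ⟨h, hh⟩ := hnonaxial g₀ hg₀
      rw [hax₀] at hh
      exact two_le_card_orbit hh
  -- main partition
  have hmain : N - 1 = (∑ i, (SF i).card) + (∑ j, (TF j).card) := by
    have hU : (Finset.univ.filter fun g : G => g ≠ 1).card = N - 1 := by
      rw [Finset.filter_ne', Finset.card_erase_of_mem (Finset.mem_univ 1), Finset.card_univ,
        hN, Nat.card_eq_fintype_card]
    have hcover : (Finset.univ.filter fun g : G => g ≠ 1)
        = (Finset.univ.biUnion SF) ∪ (Finset.univ.biUnion TF) := by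
      ext g
      simp only [Finset.mem_filter, Finset.mem_univ, true_and, Finset.mem_union,
        Finset.mem_biUnion, hSF, hTF]
      constructor
      · intro hg
        by_cases hp : axisNorm G (M.axis g) = axisCent G (M.axis g)
        · obtain ⟨i, hi, -⟩ := hAorb (M.axis g) ⟨g, hg, rfl⟩ hp
          exact Or.inl ⟨i, hg, MulAction.mem_orbit_iff.2 hi⟩
        · obtain ⟨j, hj, -⟩ := hBorb (M.axis g) ⟨g, hg, rfl⟩ hp
          exact Or.inr ⟨j, hg, MulAction.mem_orbit_iff.2 hj⟩
      · rintro (⟨i, hg, -⟩ | ⟨j, hg, -⟩) <;> exact hg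
    have hdisjS : ∀ i₁ ∈ (Finset.univ : Finset (Fin r)), ∀ i₂ ∈ Finset.univ, i₁ ≠ i₂ →
        Disjoint (SF i₁) (SF i₂) := by
      intro i₁ _ i₂ _ hne
      rw [Finset.disjoint_left]
      intro g hg1 hg2
      rw [hSF] at hg1 hg2
      obtain ⟨-, hg, ho1⟩ := Finset.mem_filter.1 hg1
      obtain ⟨-, -, ho2⟩ := Finset.mem_filter.1 hg2
      obtain ⟨h1, hh1⟩ := MulAction.mem_orbit_iff.1 ho1
      have hp : axisNorm G (M.axis g) = axisCent G (M.axis g) :=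
        (hposorb _ _ _ hh1).2 (hA i₁).2
      obtain ⟨i, -, huniq⟩ := hAorb (M.axis g) ⟨g, hg, rfl⟩ hp
      have e1 : i₁ = i := huniq i₁ (MulAction.mem_orbit_iff.1 ho1)
      have e2 : i₂ = i := huniq i₂ (MulAction.mem_orbit_iff.1 ho2)
      exact hne (e1.trans e2.symm)
    have hdisjT : ∀ j₁ ∈ (Finset.univ : Finset (Fin s)), ∀ j₂ ∈ Finset.univ, j₁ ≠ j₂ →
        Disjoint (TF j₁) (TF j₂) := by
      intro j₁ _ j₂ _ hne
      rw [Finset.disjoint_left]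
      intro g hg1 hg2
      rw [hTF] at hg1 hg2
      obtain ⟨-, hg, ho1⟩ := Finset.mem_filter.1 hg1
      obtain ⟨-, -, ho2⟩ := Finset.mem_filter.1 hg2
      obtain ⟨h1, hh1⟩ := MulAction.mem_orbit_iff.1 ho1
      have hp : axisNorm G (M.axis g) ≠ axisCent G (M.axis g) := by
        intro hcon
        exact (hB j₁).2 ((hposorb _ _ _ hh1).1 hcon)
      obtain ⟨j, -, huniq⟩ := hBorb (M.axis g) ⟨g, hg, rfl⟩ hp
      have e1 : j₁ = j := huniq j₁ (MulAction.mem_orbit_iff.1 ho1)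
      have e2 : j₂ = j := huniq j₂ (MulAction.mem_orbit_iff.1 ho2)
      exact hne (e1.trans e2.symm)
    have hdisjST : Disjoint (Finset.univ.biUnion SF) (Finset.univ.biUnion TF) := by
      rw [Finset.disjoint_left]
      intro g hg1 hg2
      obtain ⟨i, -, hi⟩ := Finset.mem_biUnion.1 hg1
      obtain ⟨j, -, hj⟩ := Finset.mem_biUnion.1 hg2
      rw [hSF] at hi; rw [hTF] at hj
      obtain ⟨-, hg, ho1⟩ := Finset.mem_filter.1 hi
      obtain ⟨-, -, ho2⟩ := Finset.mem_filter.1 hj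
      obtain ⟨h1, hh1⟩ := MulAction.mem_orbit_iff.1 ho1
      obtain ⟨h2, hh2⟩ := MulAction.mem_orbit_iff.1 ho2
      have hp : axisNorm G (M.axis g) = axisCent G (M.axis g) :=
        (hposorb _ _ _ hh1).2 (hA i).2
      exact (hB j).2 ((hposorb _ _ _ hh2).1 hp)
    rw [← hU, hcover, Finset.card_union_of_disjoint hdisjST,
      Finset.card_biUnion hdisjS, Finset.card_biUnion hdisjT]
  -- the bound `2r + s ≤ 3`
  have hbound : 2 * r + s ≤ 3 := by
    by_contra hcon
    push_neg at hcon
    have h4 : 4 ≤ 2 * r + s := hcon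
    have hS4 : ∀ i ∈ (Finset.univ : Finset (Fin r)), 2 * N ≤ 4 * (SF i).card := by
      intro i _
      obtain ⟨h1, h2, h3⟩ := hSfact i
      omega
    have hT4 : ∀ j ∈ (Finset.univ : Finset (Fin s)), N ≤ 4 * (TF j).card := by
      intro j _
      obtain ⟨h1, h2, h3⟩ := hTfact j
      omega
    have hsum1 : r * (2 * N) ≤ ∑ i, 4 * (SF i).card := by
      have := Finset.card_nsmul_le_sum Finset.univ (fun i => 4 * (SF i).card) (2 * N) hS4
      simpa [smul_eq_mul] using this
    have hsum2 : s * N ≤ ∑ j, 4 * (TF j).card := by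
      have := Finset.card_nsmul_le_sum Finset.univ (fun j => 4 * (TF j).card) N hT4
      simpa [smul_eq_mul] using this
    have htot : r * (2 * N) + s * N ≤ 4 * (N - 1) := by
      have : 4 * (N - 1) = (∑ i, 4 * (SF i).card) + (∑ j, 4 * (TF j).card) := by
        rw [hmain, Nat.mul_add, Finset.mul_sum, Finset.mul_sum]
      omega
    have hge : 4 * N ≤ (2 * r + s) * N := Nat.mul_le_mul_right N h4
    have hrw : (2 * r + s) * N = r * (2 * N) + s * N := by ring
    omega
  -- case analysis
  have hr1 : r ≤ 1 := by omega
  have hs3 : s ≤ 3 := by omega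
  interval_cases r <;> interval_cases s
  -- r = 0, s = 0
  · exfalso
    simp only [Finset.univ_eq_empty, Finset.sum_empty] at hmain
    omega
  -- r = 0, s = 1
  · exfalso
    obtain ⟨h1, h2, h3⟩ := hTfact 0
    simp only [Finset.univ_eq_empty, Finset.sum_empty, Fin.sum_univ_one] at hmain
    omega
  -- r = 0, s = 2
  · exfalso
    obtain ⟨h1, h2, h3⟩ := hTfact 0
    obtain ⟨h4, h5, h6⟩ := hTfact 1
    simp only [Finset.univ_eq_empty, Finset.sum_empty, Fin.sum_univ_two] at hmain
    omega
  -- r = 0, s = 3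
  · exact Or.inr ⟨rfl, rfl⟩
  -- r = 1, s = 0
  · exfalso
    obtain ⟨h1, h2, h3⟩ := hSfact 0
    simp only [Finset.univ_eq_empty, Finset.sum_empty, Fin.sum_univ_one] at hmain
    omega
  -- r = 1, s = 1
  · exact Or.inl ⟨rfl, rfl⟩
  -- r = 1, s = 2
  · exfalso; omega
  -- r = 1, s = 3
  · exfalso; omega

end Main
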